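/- (Consistency preservation, Theorem 5 analogue) If the inner component (S, Meth₂, Do₂, IT₂) satisfies both TP1 and TP2, then the dynamically composed component of Update methods (I × Meth₂ acting on I → S as above) satisfies both TP1 and TP2, i.e., it is consistent. -/

import Mathlib

/-!
A composite update acts on the state as `Function.update` at its index. Updates at distinct
indices are left unchanged by the transformation and commute; at a common index everything
happens in one coordinate, where TP1 and TP2 are those of the inner component.
-/

variable {I S Meth₂ : Type} [DecidableEq I]

def CompDo (Do₂ : Meth₂ → S → S) (u : I × Meth₂) (st : I → S) : I → S :=
  fun k => if k = u.1 then Do₂ u.2 (st k) else st k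

def CompIT (IT₂ : Meth₂ → Meth₂ → Meth₂) (u1 u2 : I × Meth₂) : I × Meth₂ :=
  if u1.1 = u2.1 then (u1.1, IT₂ u1.2 u2.2) else u1

def SatisfiesTP1 {M X : Type*} (Do : M → X → X) (IT : M → M → M) : Prop :=
  ∀ (x : X) (m1 m2 : M), Do (IT m2 m1) (Do m1 x) = Do (IT m1 m2) (Do m2 x)

def SatisfiesTP2 {M : Type*} (IT : M → M → M) : Prop :=
  ∀ m m1 m2 : M, IT (IT m m1) (IT m2 m1) = IT (IT m m2) (IT m1 m2)

theorem compDo_eq_update (Do₂ : Meth₂ → S → S) (u : I × Meth₂) (st : I → S) :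
    CompDo Do₂ u st = Function.update st u.1 (Do₂ u.2 (st u.1)) := by
  funext k
  by_cases hk : k = u.1 <;> simp [CompDo, hk]

theorem compIT_of_eq (IT₂ : Meth₂ → Meth₂ → Meth₂) (i : I) (m1 m2 : Meth₂) :
    CompIT IT₂ (i, m1) (i, m2) = (i, IT₂ m1 m2) := by
  simp [CompIT]

theorem compIT_of_ne (IT₂ : Meth₂ → Meth₂ → Meth₂) {i j : I} (h : i ≠ j) (m1 m2 : Meth₂) :
    CompIT IT₂ (i, m1) (j, m2) = (i, m1) := by
  simp [CompIT, h]

theorem SatisfiesTP1.compDo {Do₂ : Meth₂ → S → S} {IT₂ : Meth₂ → Meth₂ → Meth₂}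
    (h : SatisfiesTP1 Do₂ IT₂) : SatisfiesTP1 (CompDo (I := I) Do₂) (CompIT IT₂) := by
  rintro st ⟨i, m1⟩ ⟨j, m2⟩
  by_cases hij : i = j
  · subst hij
    simp only [compIT_of_eq, compDo_eq_update, Function.update_idem, Function.update_self, h (st i)]
  · rw [compIT_of_ne IT₂ (Ne.symm hij), compIT_of_ne IT₂ hij]
    simp only [compDo_eq_update, Function.update_of_ne hij, Function.update_of_ne (Ne.symm hij)]
    exact Function.update_comm hij _ _ _

theorem SatisfiesTP2.compIT {IT₂ : Meth₂ → Meth₂ → Meth₂} (h : SatisfiesTP2 IT₂) :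
    SatisfiesTP2 (CompIT (I := I) IT₂) := by
  rintro ⟨i, m⟩ ⟨j, m1⟩ ⟨l, m2⟩
  rcases eq_or_ne i j with rfl | hij <;> rcases eq_or_ne i l with rfl | hil
  · simp only [compIT_of_eq, h m m1 m2]
  · simp [CompIT, hil, hil.symm]
  · simp [CompIT, hij, hij.symm]
  · rcases eq_or_ne j l with rfl | hjl
    · simp [CompIT, hij]
    · simp [CompIT, hij, hil, hjl, hjl.symm]

theorem comp_consistent (Do₂ : Meth₂ → S → S) (IT₂ : Meth₂ → Meth₂ → Meth₂)
    (hTP1 : ∀ (s : S) (m1 m2 : Meth₂),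
      Do₂ (IT₂ m2 m1) (Do₂ m1 s) = Do₂ (IT₂ m1 m2) (Do₂ m2 s))
    (hTP2 : ∀ m m1 m2 : Meth₂,
      IT₂ (IT₂ m m1) (IT₂ m2 m1) = IT₂ (IT₂ m m2) (IT₂ m1 m2)) :
    (∀ (st : I → S) (u1 u2 : I × Meth₂),
      CompDo Do₂ (CompIT IT₂ u2 u1) (CompDo Do₂ u1 st) =
        CompDo Do₂ (CompIT IT₂ u1 u2) (CompDo Do₂ u2 st)) ∧
    (∀ u u1 u2 : I × Meth₂,
      CompIT IT₂ (CompIT IT₂ u u1) (CompIT IT₂ u2 u1) =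
        CompIT IT₂ (CompIT IT₂ u u2) (CompIT IT₂ u1 u2)) :=
  ⟨SatisfiesTP1.compDo hTP1, SatisfiesTP2.compIT hTP2⟩
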